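/- The binary tetrahedral group ⟨s, t | s³ = t³ = (st)², (st)⁴ = 1⟩ is isomorphic to SL(2, 𝔽₃) via the map sending t to −A and s to −B, where A = [[1,1],[0,1]] and B = [[1,0],[1,1]] in SL(2, 𝔽₃). -/

import Mathlib

/-! The matrices `-A` and `-B` satisfy the defining relations, so `t ↦ -A`, `s ↦ -B` defines a
homomorphism from the binary tetrahedral group to `SL(2, 𝔽₃)`. In the presented
group, `s ^ 6 = 1` and right multiplication by `s` and `t` permutes the cosets `⟨s⟩`, `⟨s⟩ t`,
`⟨s⟩ t s`, `⟨s⟩ t s²`, so every element is one of the 24 words `s ^ i * c` with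
`c ∈ {1, t, t s, t s²}`. These 24 words are sent to the 24 distinct elements of `SL(2, 𝔽₃)`,
hence the homomorphism is bijective. -/

open Matrix

instance : Fact (Even (Fintype.card (Fin 2))) := ⟨by decide⟩

/-- Relators of the presentation `⟨s, t | s³ = t³ = (st)², (st)⁴ = 1⟩` of the
binary tetrahedral group, with `s = FreeGroup.of true`, `t = FreeGroup.of false`. -/
def btetRels : Set (FreeGroup Bool) :=
  {(FreeGroup.of true) ^ 3 * ((FreeGroup.of false) ^ 3)⁻¹,
   (FreeGroup.of true) ^ 3 * ((FreeGroup.of true * FreeGroup.of false) ^ 2)⁻¹,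
   (FreeGroup.of true * FreeGroup.of false) ^ 4}

/-- The binary tetrahedral group `⟨s, t | s³ = t³ = (st)², (st)⁴ = 1⟩`. -/
def BTet : Type := PresentedGroup btetRels

instance : Group BTet := by unfold BTet; infer_instance

/-- The elementary matrix `A = [[1,1],[0,1]]` in `SL(2, 𝔽₃)`. -/
def Asl : Matrix.SpecialLinearGroup (Fin 2) (ZMod 3) :=
  ⟨!![1, 1; 0, 1], by decide⟩

/-- The elementary matrix `B = [[1,0],[1,1]]` in `SL(2, 𝔽₃)`. -/
def Bsl : Matrix.SpecialLinearGroup (Fin 2) (ZMod 3) :=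
  ⟨!![1, 0; 1, 1], by decide⟩

theorem Subgroup.induction_of_closure_eq_top_right_of_isOfFinOrder {G : Type*} [Group G]
    {X : Set G} (hX : Subgroup.closure X = ⊤) (hX_fin : ∀ x ∈ X, IsOfFinOrder x)
    {motive : G → Prop} (g : G) (one : motive 1)
    (mul_right : ∀ g, ∀ x ∈ X, motive g → motive (g * x)) : motive g := by
  refine Submonoid.induction_of_closure_eq_top_right ?_ g one mul_right
  rw [← Subgroup.closure_toSubmonoid_of_isOfFinOrder hX_fin, hX, Subgroup.top_toSubmonoid]

namespace BTet

section Words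

variable {G H : Type*} [Group G] [Group H]

def cosetRep (a b : G) : Fin 4 → G := ![1, b, b * a, b * a ^ 2]

def word (a b : G) (p : Fin 6 × Fin 4) : G := a ^ (p.1 : ℕ) * cosetRep a b p.2

theorem map_word (f : G →* H) (a b : G) (p : Fin 6 × Fin 4) :
    f (word a b p) = word (f a) (f b) p := by
  obtain ⟨i, j⟩ := p
  fin_cases j <;> simp [word, cosetRep]

end Words

def s : BTet := PresentedGroup.of true

def t : BTet := PresentedGroup.of false

theorem s_pow_three_eq_t_pow_three : s ^ 3 = t ^ 3 :=
  PresentedGroup.mk_eq_mk_of_mul_inv_mem (Or.inl rfl)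

theorem s_pow_three_eq_s_mul_t_sq : s ^ 3 = (s * t) ^ 2 :=
  PresentedGroup.mk_eq_mk_of_mul_inv_mem (Or.inr (Or.inl rfl))

theorem s_mul_t_pow_four : (s * t) ^ 4 = 1 :=
  PresentedGroup.one_of_mem (Or.inr (Or.inr rfl))

theorem s_pow_six : s ^ 6 = 1 := by
  rw [show 6 = 3 * 2 by rfl, pow_mul, s_pow_three_eq_s_mul_t_sq, ← pow_mul, s_mul_t_pow_four]

theorem t_pow_six : t ^ 6 = 1 := by
  rw [show 6 = 3 * 2 by rfl, pow_mul, ← s_pow_three_eq_t_pow_three, ← pow_mul, s_pow_six]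

theorem s_mul_t_mul_s : s * t * s = t ^ 2 := by
  have h := s_pow_three_eq_s_mul_t_sq.symm
  rw [s_pow_three_eq_t_pow_three, pow_two, pow_succ, ← mul_assoc] at h
  exact mul_right_cancel h

theorem t_mul_s_mul_t : t * s * t = s ^ 2 := by
  have h := s_pow_three_eq_s_mul_t_sq.symm
  rw [pow_two, pow_succ', ← mul_assoc, mul_assoc (s * t), mul_assoc s] at h
  exact mul_left_cancel h

theorem t_mul_s_pow_three : t * s ^ 3 = s ^ 3 * t := by
  rw [s_pow_three_eq_t_pow_three, ← pow_succ', pow_succ]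

theorem t_mul_s_sq_mul_t : t * s ^ 2 * t = s ^ 5 * (t * s ^ 2) := by
  have h : s * (t * s ^ 2 * t) = t * s ^ 2 :=
    calc s * (t * s ^ 2 * t) = s * t * s * (s * t) := by simp only [pow_two, mul_assoc]
      _ = t * (t * s * t) := by rw [s_mul_t_mul_s]; simp only [pow_two, mul_assoc]
      _ = t * s ^ 2 := by rw [t_mul_s_mul_t]
  calc t * s ^ 2 * t = s ^ 6 * (t * s ^ 2 * t) := by rw [s_pow_six, one_mul]
    _ = s ^ 5 * (t * s ^ 2) := by rw [pow_succ, mul_assoc, h]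

theorem cosetRep_mul_s (j : Fin 4) : ∃ k j', cosetRep s t j * s = s ^ k * cosetRep s t j' := by
  fin_cases j
  · exact ⟨1, 0, by simp [cosetRep]⟩
  · exact ⟨0, 2, by simp [cosetRep]⟩
  · exact ⟨0, 3, by simp [cosetRep, pow_two, mul_assoc]⟩
  · exact ⟨3, 1, by simp [cosetRep, mul_assoc, ← pow_succ, t_mul_s_pow_three]⟩

theorem cosetRep_mul_t (j : Fin 4) : ∃ k j', cosetRep s t j * t = s ^ k * cosetRep s t j' := by
  fin_cases j
  · exact ⟨0, 1, by simp [cosetRep]⟩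
  · exact ⟨1, 2, by simp [cosetRep, ← pow_two, ← s_mul_t_mul_s, mul_assoc]⟩
  · exact ⟨2, 0, by simp [cosetRep, t_mul_s_mul_t]⟩
  · exact ⟨5, 3, by simp [cosetRep, t_mul_s_sq_mul_t]⟩

theorem pow_mul_cosetRep_mem_range_word (i : ℕ) (j : Fin 4) :
    s ^ i * cosetRep s t j ∈ Set.range (word s t) :=
  ⟨(⟨i % 6, Nat.mod_lt _ (by norm_num)⟩, j), by rw [word, ← pow_eq_pow_mod i s_pow_six]⟩

theorem closure_s_t : Subgroup.closure ({s, t} : Set BTet) = ⊤ := by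
  have : ({s, t} : Set BTet) = Set.range PresentedGroup.of := by
    ext x
    constructor
    · rintro (rfl | rfl)
      exacts [⟨true, rfl⟩, ⟨false, rfl⟩]
    · rintro ⟨_ | _, rfl⟩
      exacts [Or.inr rfl, Or.inl rfl]
  rw [this]
  exact PresentedGroup.closure_range_of _

theorem isOfFinOrder_of_mem_s_t {x : BTet} (hx : x ∈ ({s, t} : Set BTet)) : IsOfFinOrder x := by
  rcases hx with rfl | rfl
  exacts [isOfFinOrder_iff_pow_eq_one.mpr ⟨6, by norm_num, s_pow_six⟩,
    isOfFinOrder_iff_pow_eq_one.mpr ⟨6, by norm_num, t_pow_six⟩]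

theorem word_surjective : Function.Surjective (word s t) := by
  intro g
  induction g using Subgroup.induction_of_closure_eq_top_right_of_isOfFinOrder
    closure_s_t (fun _ => isOfFinOrder_of_mem_s_t) with
  | one => exact ⟨(0, 0), by simp [word, cosetRep]⟩
  | mul_right g x hx hg =>
    obtain ⟨⟨i, j⟩, rfl⟩ := hg
    obtain ⟨k, j', hk⟩ : ∃ k j', cosetRep s t j * x = s ^ k * cosetRep s t j' := by
      rcases hx with rfl | rfl
      exacts [cosetRep_mul_s j, cosetRep_mul_t j]
    rw [word, mul_assoc, hk, ← mul_assoc, ← pow_add]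
    exact pow_mul_cosetRep_mem_range_word _ j'

def toSL : BTet →* SpecialLinearGroup (Fin 2) (ZMod 3) :=
  PresentedGroup.toGroup (f := fun b => if b then -Bsl else -Asl) <| by
    rintro r (rfl | rfl | rfl) <;> decide

theorem toSL_s : toSL s = -Bsl := PresentedGroup.toGroup.of _

theorem toSL_t : toSL t = -Asl := PresentedGroup.toGroup.of _

theorem word_neg_Bsl_neg_Asl_bijective : Function.Bijective (word (-Bsl) (-Asl)) := by
  decide

end BTet

/-- The binary tetrahedral group is isomorphic to `SL(2, 𝔽₃)` via the map
sending `t` to `−A` and `s` to `−B`. -/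
theorem btet_iso_sl2_f3 :
    ∃ φ : BTet ≃* Matrix.SpecialLinearGroup (Fin 2) (ZMod 3),
      φ (PresentedGroup.of false) = -Asl ∧ φ (PresentedGroup.of true) = -Bsl := by
  open BTet in
  have hcomp : toSL ∘ word s t = word (-Bsl) (-Asl) := by
    ext1 p
    rw [Function.comp_apply, map_word, toSL_s, toSL_t]
  have hbij := word_neg_Bsl_neg_Asl_bijective
  rw [← hcomp] at hbij
  exact ⟨.ofBijective toSL ⟨hbij.1.of_comp_right word_surjective, hbij.2.of_comp⟩, toSL_t, toSL_s⟩
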